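/- arXiv:2108.09560 — 7 statements merged into one kernel-verified Lean document; each statement's English description precedes it below -/
import Mathlib

section
/- For all nonnegative integers t ≤ n (with n ≥ 1), the alternating sum $\sum_{t=0}^{n}(-1)^t\frac{(2n-t)!}{t!\,(n-t)!\,(n+1-t)!}=0$. -/
open Polynomial Finset Nat

/-!
Multiplied by `n`, the `t`-th term becomes `(-1)^t C(n,t) C(2n-t, n+1-t)`. Writing
`(1+X)^n = (-X + (1+X))^n (1+X)^n` and expanding the first factor binomially, the coefficient
of `X^(n+1)` shows that these integers sum to `C(n, n+1) = 0`.
-/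

theorem alternating_sum_choose_mul_choose_add_sub {n m : ℕ} (k : ℕ) (hnm : n ≤ m) :
    ∑ t ∈ range (n + 1), (-1 : ℤ) ^ t * n.choose t * (n + k - t).choose (m - t) = k.choose m := by
  have hpoly : ∑ t ∈ range (n + 1),
      C ((-1 : ℤ) ^ t * n.choose t) * (X ^ t * (X + 1) ^ (n + k - t)) = (X + 1) ^ k :=
    calc _ = (∑ t ∈ range (n + 1), (-X) ^ t * (X + 1) ^ (n - t) * (n.choose t : ℤ[X]))
          * (X + 1) ^ k := by
          rw [sum_mul]
          refine sum_congr rfl fun t ht => ?_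
          rw [show n + k - t = n - t + k by grind, pow_add, neg_pow]
          simp only [map_mul, map_pow, map_neg, map_one, map_natCast]
          ring
      _ = (X + 1) ^ k := by rw [← add_pow, neg_add_cancel_left, one_pow, one_mul]
  have hcoeff := congrArg (coeff · m) hpoly
  simp only [finsetSum_coeff, coeff_C_mul, coeff_X_pow_mul', coeff_X_add_one_pow] at hcoeff
  rw [← hcoeff]
  refine sum_congr rfl fun t ht => ?_
  rw [if_pos (by grind)]

theorem Nat.mul_factorial_two_mul_sub {n t : ℕ} (hn : 1 ≤ n) (ht : t ≤ n) :
    n * (2 * n - t)! =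
      n.choose t * (2 * n - t).choose (n + 1 - t) * (t ! * (n - t)! * (n + 1 - t)!) := by
  have e1 := choose_mul_factorial_mul_factorial ht
  have e2 := choose_mul_factorial_mul_factorial (show n + 1 - t ≤ 2 * n - t by omega)
  rw [show 2 * n - t - (n + 1 - t) = n - 1 by omega] at e2
  have e3 := mul_factorial_pred (show n ≠ 0 by omega)
  apply Nat.eq_of_mul_eq_mul_right (factorial_pos (n - 1))
  calc _ = n * (n - 1)! * (2 * n - t)! := by ring
    _ = _ := by rw [e3, ← e1, ← e2]; ring

/-- Cohen's identity: for `n ≥ 1`,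
`∑_{t=0}^{n} (-1)^t (2n-t)! / (t! (n-t)! (n+1-t)!) = 0`. -/
theorem cohen_alternating_factorial_sum (n : ℕ) (hn : 1 ≤ n) :
    ∑ t ∈ Finset.range (n + 1),
      (-1 : ℝ) ^ t * ((2 * n - t).factorial : ℝ) /
        ((t.factorial : ℝ) * ((n - t).factorial : ℝ) * ((n + 1 - t).factorial : ℝ)) = 0 := by
  have hscaled : ∀ t ∈ range (n + 1),
      (n : ℝ) * ((-1 : ℝ) ^ t * ((2 * n - t)! : ℝ) / (t ! * (n - t)! * (n + 1 - t)!))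
        = (((-1 : ℤ) ^ t * n.choose t * (n + n - t).choose (n + 1 - t) : ℤ) : ℝ) := by
    intro t ht
    have key : ((n * (2 * n - t)! : ℕ) : ℝ) = _ :=
      congrArg _ (mul_factorial_two_mul_sub hn (by grind))
    push_cast at key ⊢
    rw [← two_mul, mul_div_assoc', mul_left_comm, key]
    field_simp
  refine (mul_eq_zero_iff_left (Nat.cast_ne_zero.mpr (by omega : n ≠ 0))).mp ?_
  rw [mul_sum, sum_congr rfl hscaled, ← Int.cast_sum,
    alternating_sum_choose_mul_choose_add_sub n (by omega), choose_succ_self, Nat.cast_zero,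
    Int.cast_zero]
end

section
/- For nonnegative integers $\mu \le \nu$, one has $\binom{\nu+1/2}{\nu-\mu}\binom{\nu+1/2}{\mu} = 2^{-2\nu-1}\binom{2\nu+1}{\nu+1}\binom{2\nu+2}{2\mu+1}$, where binomial coefficients with half-integer top argument are defined via the Gamma function: $\binom{x}{k} = \frac{\Gamma(x+1)}{\Gamma(k+1)\Gamma(x-k+1)}$. -/
/-!
Legendre's duplication formula at `s = n + 1` gives `Γ(n + 3/2) = (2n+1)! √π / (2^(2n+1) n!)`.
Writing `ν = a + b`, the left-hand side is `Γ(ν + 3/2)² / (a! b! Γ(a + 3/2) Γ(b + 3/2))`, in which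
`π` and `a! b!` cancel, leaving `(2ν+1)!² / (4^ν ν!² (2a+1)! (2b+1)!)`; the right-hand side reduces
to the same quotient because `(2ν+2)! / (ν+1)! = 2 (2ν+1)! / ν!`.
-/

/-- The generalized binomial coefficient `x choose k` for real `x` and natural `k`,
defined via the Gamma function: `Γ(x+1) / (Γ(k+1) Γ(x-k+1))`. -/
noncomputable def gammaBinom (x : ℝ) (k : ℕ) : ℝ :=
  Real.Gamma (x + 1) / (Real.Gamma ((k : ℝ) + 1) * Real.Gamma (x - (k : ℝ) + 1))

open Nat Real

theorem Real.Gamma_nat_add_three_halves (n : ℕ) :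
    Gamma (n + 3 / 2) = (2 * n + 1)! * √π / (2 ^ (2 * n + 1) * n !) := by
  have duplication := Gamma_mul_Gamma_add_half (n + 1)
  rw [show (n : ℝ) + 1 + 1 / 2 = n + 3 / 2 by ring,
    show 2 * ((n : ℝ) + 1) = ↑(2 * n + 1) + 1 by push_cast; ring,
    show 1 - (↑(2 * n + 1) + 1 : ℝ) = -↑(2 * n + 1) by ring, rpow_neg zero_le_two, rpow_natCast,
    Gamma_nat_eq_factorial, Gamma_nat_eq_factorial] at duplication
  rw [eq_div_iff (by positivity)]
  calc Gamma (n + 3 / 2) * (2 ^ (2 * n + 1) * n !)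
      = n ! * Gamma (n + 3 / 2) * 2 ^ (2 * n + 1) := by ring
    _ = (2 * n + 1)! * √π := by rw [duplication]; field_simp

theorem gammaBinom_nat_add_half (a b : ℕ) :
    gammaBinom ((a + b : ℕ) + 1 / 2) b =
      Gamma ((a + b : ℕ) + 3 / 2) / (b ! * Gamma (a + 3 / 2)) := by
  rw [gammaBinom, Gamma_nat_eq_factorial,
    show (a + b : ℕ) + 1 / 2 + 1 = (a + b : ℕ) + (3 / 2 : ℝ) by ring,
    show (a + b : ℕ) + 1 / 2 - b + 1 = (a + 3 / 2 : ℝ) by push_cast; ring]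

theorem gammaBinom_mul_gammaBinom_nat_add_half (a b : ℕ) :
    gammaBinom ((a + b : ℕ) + 1 / 2) b * gammaBinom ((a + b : ℕ) + 1 / 2) a =
      (2 * (a + b) + 1)! ^ 2 /
        (2 ^ (2 * (a + b)) * (a + b)! ^ 2 * (2 * a + 1)! * (2 * b + 1)!) := by
  rw [gammaBinom_nat_add_half, add_comm a b, gammaBinom_nat_add_half, add_comm b a,
    Gamma_nat_add_three_halves, Gamma_nat_add_three_halves, Gamma_nat_add_three_halves]
  have : √π ≠ 0 := by positivity
  field_simp
  ring

theorem Nat.cast_choose_mul_choose_eq_factorial (a b : ℕ) :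
    ((2 * (a + b) + 1).choose (a + b + 1) * (2 * (a + b) + 2).choose (2 * a + 1) : ℝ) =
      2 * (2 * (a + b) + 1)! ^ 2 / ((a + b)! ^ 2 * (2 * a + 1)! * (2 * b + 1)!) := by
  rw [show 2 * (a + b) + 1 = a + b + 1 + (a + b) by ring, cast_add_choose,
    show 2 * (a + b) + 2 = 2 * a + 1 + (2 * b + 1) by ring, cast_add_choose,
    show 2 * a + 1 + (2 * b + 1) = (a + b + 1 + (a + b)) + 1 by ring, factorial_succ (a + b)]
  push_cast [factorial_succ]
  field_simp
  ring

/-- For nonnegative integers `μ ≤ ν`,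
`(ν+1/2 choose ν-μ)(ν+1/2 choose μ) = 2^{-2ν-1} C(2ν+1, ν+1) C(2ν+2, 2μ+1)`. -/
theorem half_integer_binomial_identity (ν μ : ℕ) (hμν : μ ≤ ν) :
    gammaBinom ((ν : ℝ) + 1 / 2) (ν - μ) * gammaBinom ((ν : ℝ) + 1 / 2) μ =
      (2 : ℝ) ^ (-(2 * (ν : ℤ)) - 1) * ((2 * ν + 1).choose (ν + 1) : ℝ) *
        ((2 * ν + 2).choose (2 * μ + 1) : ℝ) := by
  obtain ⟨b, rfl⟩ := Nat.exists_eq_add_of_le hμν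
  rw [Nat.add_sub_cancel_left, gammaBinom_mul_gammaBinom_nat_add_half,
    show -(2 * ((μ + b : ℕ) : ℤ)) - 1 = -↑(2 * (μ + b) + 1) by push_cast; ring,
    zpow_neg, zpow_natCast, mul_assoc (_⁻¹), Nat.cast_choose_mul_choose_eq_factorial]
  field_simp
  ring
end

section
/- For integers $0 \le \mu \le \nu$ and $j \ge 0$ with $j \ne \mu$ in the sense that $j-\mu-1/2 \ne 0$ automatically, one has $\binom{2\nu-\mu+1/2}{2\nu+1-j}\binom{j-\mu-3/2}{j} = \frac{(-1)^{\mu+1}}{j-\mu-1/2}\cdot 2^{-4\nu-2}\cdot\frac{(4\nu-2\mu+1)!\,(2\mu+1)!}{(2\nu-\mu)!\,\mu!\,j!\,(2\nu-j+1)!}$, where $j \le 2\nu+1$ so that all factorials are of nonnegative integers, and binomial coefficients with non-integral arguments are defined via the Gamma function. -/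
/-!
Writing both binomials as Gamma quotients, the factor `Γ(j - μ - 1/2)` cancels against
`Γ(j - μ + 1/2) = (j - μ - 1/2) Γ(j - μ - 1/2)`, leaving `Γ(2ν - μ + 3/2) / Γ(-μ - 1/2)`.
The reflection formula turns `Γ(-μ - 1/2)` into `(-1)^(μ+1) π / Γ(μ + 3/2)`, and
`Γ(n + 3/2) = √π (2n+1)! / (2^(2n+1) n!)` evaluates what remains.
-/

open Real Nat

namespace Real

theorem Gamma_nat_add_three_halves_s2 (n : ℕ) :
    Gamma (n + 3 / 2) = √π * (2 * n + 1)! / (2 ^ (2 * n + 1) * n !) := by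
  induction n with
  | zero =>
    rw [show ((0 : ℕ) : ℝ) + 3 / 2 = 1 / 2 + 1 by norm_num, Gamma_add_one (by norm_num),
      Gamma_one_half_eq]
    simp only [mul_zero, zero_add, factorial_zero, factorial_one, cast_one, mul_one, pow_one]
    ring
  | succ n ih =>
    rw [show ((n + 1 : ℕ) : ℝ) + 3 / 2 = (n + 3 / 2) + 1 by push_cast; ring,
      Gamma_add_one (by positivity), ih,
      show 2 * (n + 1) + 1 = (2 * n + 1) + 1 + 1 by ring, factorial_succ (2 * n + 1 + 1),
      factorial_succ (2 * n + 1), factorial_succ n]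
    push_cast
    field_simp
    ring

theorem Gamma_neg_nat_sub_half_mul_Gamma_nat_add_three_halves (n : ℕ) :
    Gamma (-n - 1 / 2) * Gamma (n + 3 / 2) = (-1) ^ (n + 1) * π := by
  have hsin : sin (π * (n + 3 / 2)) = (-1) ^ (n + 1) := by
    rw [show π * (n + 3 / 2) = ((n + 1 : ℕ) : ℝ) * π + π / 2 by push_cast; ring,
      sin_add_pi_div_two, cos_nat_mul_pi]
  rw [mul_comm, show (-n - 1 / 2 : ℝ) = 1 - (n + 3 / 2) by ring, Gamma_mul_Gamma_one_sub, hsin]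
  rcases neg_one_pow_eq_or ℝ (n + 1) with h | h <;> rw [h] <;> ring

theorem Gamma_int_sub_half_ne_zero (k : ℤ) : Gamma (k - 1 / 2) ≠ 0 := by
  refine Gamma_ne_zero fun m h => ?_
  have : (2 * k - 1 : ℤ) = -2 * m := by exact_mod_cast (by linarith : (2 * k - 1 : ℝ) = -2 * m)
  omega

end Real

theorem gammaBinom_mul_gammaBinom_of_sub_eq {x y : ℝ} {N : ℕ} (j : ℕ) (hxy : x - N = y + 1)
    (hy : Gamma (y + 1) ≠ 0) :
    gammaBinom x N * gammaBinom y j =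
      Gamma (x + 1) / (N ! * j ! * (y + 1) * Gamma (y - j + 1)) := by
  have hy0 : y + 1 ≠ 0 := fun h => hy (by rw [h, Gamma_zero])
  unfold gammaBinom
  rw [hxy, Gamma_add_one hy0, Gamma_nat_eq_factorial, Gamma_nat_eq_factorial]
  field_simp

theorem Gamma_nat_add_three_halves_div_Gamma_neg_nat_sub_half (m n : ℕ) :
    Gamma (m + 3 / 2) / Gamma (-n - 1 / 2)
      = (-1) ^ (n + 1) * ((2 * m + 1)! * (2 * n + 1)!) / (2 ^ (2 * m + 2 * n + 2) * m ! * n !) := by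
  have hn : Gamma (-n - 1 / 2) = (-1) ^ (n + 1) * π / Gamma (n + 3 / 2) := by
    rw [← Gamma_neg_nat_sub_half_mul_Gamma_nat_add_three_halves, mul_div_cancel_right₀]
    rw [Gamma_nat_add_three_halves_s2]; positivity
  rw [hn, Gamma_nat_add_three_halves_s2, Gamma_nat_add_three_halves_s2]
  have hπ : √π ^ 2 = π := sq_sqrt pi_pos.le
  have hsign : ((-1 : ℝ) ^ (n + 1)) ^ 2 = 1 := by rw [← pow_mul, pow_mul', neg_one_sq, one_pow]
  field_simp
  rw [hπ, hsign]
  ring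

/-- For integers `0 ≤ μ ≤ ν` and `0 ≤ j ≤ 2ν+1`,
`(2ν-μ+1/2 choose 2ν+1-j)(j-μ-3/2 choose j)
  = (-1)^{μ+1}/(j-μ-1/2) · 2^{-4ν-2} · (4ν-2μ+1)!(2μ+1)! / ((2ν-μ)! μ! j! (2ν-j+1)!)`. -/
theorem half_integer_binomial_product_identity (ν μ j : ℕ) (hμν : μ ≤ ν)
    (hj : j ≤ 2 * ν + 1) :
    gammaBinom (2 * (ν : ℝ) - (μ : ℝ) + 1 / 2) (2 * ν + 1 - j) *
        gammaBinom ((j : ℝ) - (μ : ℝ) - 3 / 2) j =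
      (-1 : ℝ) ^ (μ + 1) / ((j : ℝ) - (μ : ℝ) - 1 / 2) * (2 : ℝ) ^ (-(4 * (ν : ℤ)) - 2) *
        (((4 * ν - 2 * μ + 1).factorial : ℝ) * ((2 * μ + 1).factorial : ℝ)) /
          (((2 * ν - μ).factorial : ℝ) * (μ.factorial : ℝ) * (j.factorial : ℝ) *
            ((2 * ν + 1 - j).factorial : ℝ)) := by
  have hm : ((2 * ν - μ : ℕ) : ℝ) = 2 * ν - μ := by
    rw [Nat.cast_sub (by omega)]; push_cast; ring
  have hN : ((2 * ν + 1 - j : ℕ) : ℝ) = 2 * ν + 1 - j := by push_cast [hj]; ring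
  have hC : Gamma ((j : ℝ) - μ - 3 / 2 + 1) ≠ 0 := by
    convert Gamma_int_sub_half_ne_zero (j - μ) using 2
    push_cast
    ring
  rw [gammaBinom_mul_gammaBinom_of_sub_eq j (by rw [hN]; ring) hC,
    show 2 * (ν : ℝ) - μ + 1 / 2 + 1 = (2 * ν - μ : ℕ) + 3 / 2 by rw [hm]; ring,
    show (j : ℝ) - μ - 3 / 2 - j + 1 = -μ - 1 / 2 by ring, mul_comm _ (Gamma _), ← div_div,
    Gamma_nat_add_three_halves_div_Gamma_neg_nat_sub_half,
    show 2 * (2 * ν - μ) + 2 * μ + 2 = 4 * ν + 2 by omega,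
    show 2 * (2 * ν - μ) + 1 = 4 * ν - 2 * μ + 1 by omega,
    show (-(4 * (ν : ℤ)) - 2) = -((4 * ν + 2 : ℕ) : ℤ) by push_cast; ring,
    zpow_neg, zpow_natCast,
    show (j : ℝ) - μ - 3 / 2 + 1 = j - μ - 1 / 2 by ring]
  generalize (j : ℝ) - μ - 1 / 2 = C
  ring
end

section
/- For integers $\nu \ge 1$ and $j \ge 0$ with $j \le \nu+1$, one has $\sum_{\mu=0}^{\nu}\frac{(-1)^\mu}{\mu-j+1/2}\cdot\frac{(4\nu-2\mu+1)!}{(2\nu-\mu)!\,\mu!\,(2\nu-2\mu+1)!} = 2^{4\nu+2}(-1)^j\frac{(2\nu-j+1)!\,j!}{(2j)!\,(2\nu-2j+2)!}$. -/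
/-!
Let `P(x) = ∏_{i < ν} (x - ν - 3/2 - i)` and `N(x) = ∏_{l ≤ ν} (x - l)`. Up to the factor `-4^ν`,
the `μ`-th summand is the partial fraction term of `P / N` at the simple pole `x = μ`, evaluated at
`x = j - 1/2`. As `deg P < deg N`, Lagrange interpolation of `P` at the nodes `0, …, ν` shows that
these terms add up to `P / N`, so the sum equals `-4^ν P(j - 1/2) / N(j - 1/2)`. Both values are
products of consecutive integers or half-integers, hence ratios of factorials, via
`∏_{i < n} (i + 1/2) = (2n)! / (4^n n!)`.
-/

open Finset Polynomial Lagrange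
open scoped Nat

theorem Lagrange.eval_eq_eval_nodal_mul_sum {F ι : Type*} [Field F] [DecidableEq ι]
    {s : Finset ι} {v : ι → F} {p : F[X]} {x : F}
    (hvs : Set.InjOn v s) (hp : p.degree < #s) (hx : ∀ i ∈ s, x ≠ v i) :
    p.eval x = (nodal s v).eval x * ∑ i ∈ s, nodalWeight s v i * (x - v i)⁻¹ * p.eval (v i) := by
  conv_lhs => rw [eq_interpolate hvs hp]
  exact eval_interpolate_not_at_node _ hx

theorem prod_erase_range_natCast_sub {R : Type*} [CommRing R] (μ m : ℕ) :
    ∏ l ∈ (range (μ + m + 1)).erase μ, ((μ : R) - l) = (-1) ^ m * μ ! * m ! := by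
  induction m with
  | zero =>
    rw [add_zero, range_add_one, erase_insert notMem_range_self, ← prod_range_reflect]
    have h : ∀ l ∈ range μ, ((μ : R) - ((μ - 1 - l : ℕ) : R)) = ((l + 1 : ℕ) : R) := by
      intro l hl
      rw [mem_range] at hl
      rw [Nat.cast_sub (by omega), Nat.cast_sub (by omega)]
      push_cast
      ring
    rw [prod_congr rfl h, ← Nat.cast_prod, prod_range_add_one_eq_factorial]
    simp
  | succ m ih =>
    rw [show μ + (m + 1) + 1 = μ + m + 1 + 1 by ring, range_add_one,
      erase_insert_of_ne (by omega), prod_insert (by simp), ih]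
    push_cast [Nat.factorial_succ]
    ring

theorem Lagrange.nodalWeight_range_natCast {F : Type*} [Field F] (μ m : ℕ) :
    nodalWeight (range (μ + m + 1)) (Nat.cast : ℕ → F) μ = (-1) ^ m / (μ ! * m !) := by
  rw [nodalWeight, prod_inv_distrib, prod_erase_range_natCast_sub, mul_assoc, mul_inv,
    ← inv_pow, inv_neg_one, div_eq_mul_inv]

section HalfIntegerProducts

variable {K : Type*} [Field K] [CharZero K]

theorem four_pow_mul_factorial_mul_prod_range_add_half (n : ℕ) :
    4 ^ n * n ! * ∏ i ∈ range n, ((i : K) + 1 / 2) = (2 * n)! := by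
  induction n with
  | zero => simp
  | succ n ih =>
    rw [prod_range_succ, show 2 * (n + 1) = 2 * n + 1 + 1 by ring]
    push_cast [Nat.factorial_succ]
    linear_combination (2 * (n : K) + 2) * (2 * n + 1) * ih

theorem four_pow_mul_factorial_mul_prod_range_add_three_halves (a n : ℕ) :
    4 ^ n * (a + n)! * (2 * a + 1)! * ∏ i ∈ range n, ((a + i : K) + 3 / 2) =
      (2 * (a + n) + 1)! * a ! := by
  induction n with
  | zero => simp [mul_comm]
  | succ n ih =>
    rw [prod_range_succ, show 2 * (a + (n + 1)) + 1 = 2 * (a + n) + 1 + 1 + 1 by ring,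
      ← add_assoc]
    push_cast [Nat.factorial_succ (a + n), Nat.factorial_succ (2 * (a + n) + 1 + 1),
      Nat.factorial_succ (2 * (a + n) + 1)]
    linear_combination (2 * ((a : K) + n) + 3) * (2 * ((a : K) + n) + 2) * ih

theorem four_pow_mul_factorial_mul_eval_nodal_range_natCast (j k : ℕ) :
    4 ^ (j + k) * j ! * k ! * (nodal (range (j + k)) (Nat.cast : ℕ → K)).eval ((j : K) - 1 / 2) =
      (-1) ^ k * (2 * j)! * (2 * k)! := by
  have hleft : ∏ l ∈ range j, ((j : K) - 1 / 2 - l) = ∏ l ∈ range j, ((l : K) + 1 / 2) := by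
    rw [← prod_range_reflect (fun l => (l : K) + 1 / 2)]
    refine prod_congr rfl fun l hl => ?_
    rw [mem_range] at hl
    rw [Nat.cast_sub (by omega), Nat.cast_sub (by omega)]
    push_cast
    ring
  have hright : ∀ i ∈ range k, ((j : K) - 1 / 2 - (j + i : ℕ)) = -1 * ((i : K) + 1 / 2) := by
    intro i _
    push_cast
    ring
  rw [eval_nodal, prod_range_add, hleft, prod_congr rfl hright, prod_mul_distrib, prod_const,
    card_range]
  linear_combination (-1) ^ k * (4 ^ k * k ! * ∏ i ∈ range k, ((i : K) + 1 / 2)) *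
      four_pow_mul_factorial_mul_prod_range_add_half (K := K) j +
    (-1) ^ k * ((2 * j)! : K) * four_pow_mul_factorial_mul_prod_range_add_half (K := K) k

end HalfIntegerProducts

theorem factorial_mul_prod_range_natCast_add_one_add {R : Type*} [CommSemiring R] (a n : ℕ) :
    (a ! : R) * ∏ i ∈ range n, ((a : R) + 1 + i) = (a + n)! := by
  rw [← Nat.factorial_mul_ascFactorial, Nat.ascFactorial_eq_prod_range]
  push_cast
  rfl

theorem four_pow_mul_nodalWeight_mul_eval_nodal {ν μ : ℕ} (hμ : μ ≤ ν) :
    4 ^ ν * (nodalWeight (range (ν + 1)) (Nat.cast : ℕ → ℝ) μ *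
      (nodal (range ν) fun i => (ν : ℝ) + 3 / 2 + i).eval (μ : ℝ)) =
    (-1) ^ μ * ((4 * ν - 2 * μ + 1)! / ((2 * ν - μ)! * μ ! * (2 * ν - 2 * μ + 1)!)) := by
  obtain ⟨m, rfl⟩ := Nat.exists_eq_add_of_le hμ
  have hprod := four_pow_mul_factorial_mul_prod_range_add_three_halves (K := ℝ) m (μ + m)
  have hnodes : ∀ i ∈ range (μ + m),
      (μ : ℝ) - ((μ + m : ℕ) + 3 / 2 + i) = -1 * ((m + i : ℝ) + 3 / 2) := by
    intro i _
    push_cast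
    ring
  have hsign : (-1 : ℝ) ^ m * (-1) ^ (μ + m) = (-1) ^ μ := by
    rw [pow_add, mul_left_comm, ← mul_pow, neg_one_mul, neg_neg, one_pow, mul_one]
  rw [nodalWeight_range_natCast, eval_nodal, prod_congr rfl hnodes, prod_mul_distrib, prod_const,
    card_range, show 4 * (μ + m) - 2 * μ + 1 = 2 * (m + (μ + m)) + 1 by omega,
    show 2 * (μ + m) - μ = m + (μ + m) by omega, show 2 * (μ + m) - 2 * μ + 1 = 2 * m + 1 by omega,
    ← hsign, eq_div_of_mul_eq (by positivity) ((mul_comm _ _).trans hprod)]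
  field_simp

theorem factorial_mul_eval_nodal_sub_half {ν j k : ℕ} (hk : ν + 1 = j + k) :
    k ! * (nodal (range ν) fun i => (ν : ℝ) + 3 / 2 + i).eval ((j : ℝ) - 1 / 2) =
      (-1) ^ ν * (ν + k)! := by
  have hnodes : ∀ i ∈ range ν, (j : ℝ) - 1 / 2 - (ν + 3 / 2 + i) = -1 * ((k : ℝ) + 1 + i) := by
    intro i _
    have : (j : ℝ) = ν + 1 - k := by rw [eq_sub_iff_add_eq]; exact_mod_cast hk.symm
    rw [this]
    ring
  rw [eval_nodal, prod_congr rfl hnodes, prod_mul_distrib, prod_const, card_range, mul_left_comm,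
    factorial_mul_prod_range_natCast_add_one_add, add_comm k]

theorem sum_neg_one_pow_div_mul_eq_eval_div_eval_nodal (ν : ℕ) {y : ℝ}
    (hy : ∀ μ ∈ range (ν + 1), y - 1 / 2 ≠ μ) :
    ∑ μ ∈ range (ν + 1), (-1 : ℝ) ^ μ / ((μ : ℝ) - y + 1 / 2) *
        ((4 * ν - 2 * μ + 1)! / ((2 * ν - μ)! * μ ! * (2 * ν - 2 * μ + 1)! : ℝ)) =
      -(4 ^ ν * ((nodal (range ν) fun i => (ν : ℝ) + 3 / 2 + i).eval (y - 1 / 2) /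
        (nodal (range (ν + 1)) (Nat.cast : ℕ → ℝ)).eval (y - 1 / 2))) := by
  have hdeg : (nodal (range ν) fun i => (ν : ℝ) + 3 / 2 + i).degree < #(range (ν + 1)) := by
    rw [degree_nodal, card_range, card_range]
    exact_mod_cast ν.lt_succ_self
  rw [eval_eq_eval_nodal_mul_sum Nat.cast_injective.injOn hdeg hy,
    mul_div_cancel_left₀ _ (eval_nodal_not_at_node hy), mul_sum, ← sum_neg_distrib]
  refine sum_congr rfl fun μ hμ => ?_
  rw [show y - 1 / 2 - μ = -((μ : ℝ) - y + 1 / 2) by ring, inv_neg]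
  linear_combination -((μ : ℝ) - y + 1 / 2)⁻¹ *
    four_pow_mul_nodalWeight_mul_eval_nodal (Nat.lt_succ_iff.mp (mem_range.mp hμ))

theorem multinomial_alternating_sum_general (ν j : ℕ) (hj : j ≤ ν + 1) :
    ∑ μ ∈ Finset.range (ν + 1),
      (-1 : ℝ) ^ μ / ((μ : ℝ) - (j : ℝ) + 1 / 2) *
        (((4 * ν - 2 * μ + 1).factorial : ℝ) /
          (((2 * ν - μ).factorial : ℝ) * (μ.factorial : ℝ) *
            ((2 * ν - 2 * μ + 1).factorial : ℝ))) =
      2 ^ (4 * ν + 2) * (-1 : ℝ) ^ j *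
        (((2 * ν + 1 - j).factorial : ℝ) * (j.factorial : ℝ)) /
          (((2 * j).factorial : ℝ) * ((2 * ν + 2 - 2 * j).factorial : ℝ)) := by
  obtain ⟨k, hk⟩ := Nat.exists_eq_add_of_le hj
  have hj_not_node : ∀ μ ∈ range (ν + 1), (j : ℝ) - 1 / 2 ≠ μ := by
    intro μ _ h
    have : 2 * j = 2 * μ + 1 := by exact_mod_cast (show (2 * j : ℝ) = 2 * μ + 1 by linarith)
    omega
  have hP := factorial_mul_eval_nodal_sub_half hk
  have hN := four_pow_mul_factorial_mul_eval_nodal_range_natCast (K := ℝ) j k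
  have hsign : (-1 : ℝ) ^ j * (-1) ^ k = -(-1) ^ ν := by
    rw [← pow_add, ← hk, pow_succ, mul_neg_one]
  have hpow : (2 : ℝ) ^ (4 * ν + 2) = 4 ^ ν * 4 ^ (j + k) := by
    rw [← hk, ← pow_add, show 4 * ν + 2 = 2 * (ν + (ν + 1)) by ring, pow_mul]
    norm_num
  rw [sum_neg_one_pow_div_mul_eq_eval_div_eval_nodal ν hj_not_node, hk,
    show 2 * ν + 1 - j = ν + k by omega, show 2 * ν + 2 - 2 * j = 2 * k by omega,
    eq_div_of_mul_eq (by positivity) ((mul_comm _ _).trans hP),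
    eq_div_of_mul_eq (by positivity) ((mul_comm _ _).trans hN), hpow]
  field_simp
  linear_combination -hsign

/-- For integers `ν ≥ 1` and `0 ≤ j ≤ ν+1`,
`∑_{μ=0}^{ν} (-1)^μ/(μ-j+1/2) · (4ν-2μ+1)!/((2ν-μ)! μ! (2ν-2μ+1)!)
  = 2^{4ν+2} (-1)^j (2ν-j+1)! j! / ((2j)! (2ν-2j+2)!)`. -/
theorem multinomial_alternating_sum (ν j : ℕ) (hν : 1 ≤ ν) (hj : j ≤ ν + 1) :
    ∑ μ ∈ Finset.range (ν + 1),
      (-1 : ℝ) ^ μ / ((μ : ℝ) - (j : ℝ) + 1 / 2) *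
        (((4 * ν - 2 * μ + 1).factorial : ℝ) /
          (((2 * ν - μ).factorial : ℝ) * (μ.factorial : ℝ) *
            ((2 * ν - 2 * μ + 1).factorial : ℝ))) =
      2 ^ (4 * ν + 2) * (-1 : ℝ) ^ j *
        (((2 * ν + 1 - j).factorial : ℝ) * (j.factorial : ℝ)) /
          (((2 * j).factorial : ℝ) * ((2 * ν + 2 - 2 * j).factorial : ℝ)) :=
  multinomial_alternating_sum_general ν j hj
end

section
/- Let $a\ge 2$ be an integer and $b$ a real number with $b\ne 1,2$. Define $P_{a,b}(X,Y):=\sum_{j=0}^{a-2}\binom{j+b-2}{j}X^j(X+Y)^{a-j-2}$. Then $P_{a,b}(X,Y)=\sum_{j=0}^{a-2}\binom{a+b-3}{a-2-j}\binom{j+b-2}{j}(X+Y)^{a-2-j}(-Y)^j$ as polynomials in $X,Y$. -/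
/-- The binomial coefficient `x choose k` for real `x` and natural `k`,
defined as `x(x-1)⋯(x-k+1)/k!`. -/
noncomputable def realBinom (x : ℝ) (k : ℕ) : ℝ :=
  (∏ i ∈ Finset.range k, (x - (i : ℝ))) / (k.factorial : ℝ)

/-- The polynomial `P_{a,b}(X,Y) = ∑_{j=0}^{a-2} (j+b-2 choose j) X^j (X+Y)^{a-j-2}`. -/
noncomputable def Pab (a : ℕ) (b : ℝ) (X Y : ℝ) : ℝ :=
  ∑ j ∈ Finset.range (a - 1), realBinom ((j : ℝ) + b - 2) j * X ^ j * (X + Y) ^ (a - j - 2)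

/-!
Put `n = a - 2`, `S = X + Y`, `T = -Y` and `r = b - 2`. Expanding `X ^ j = (T + S) ^ j` binomially
and exchanging the two sums, the coefficient of `S ^ (n - i) * T ^ i` becomes
`∑_{j=i}^{n} C(j,i) C(r+j, j)`. Since `C(j,i) C(r+j, j) = C(r+i, i) C(r+j, j-i)`, the parallel
summation (hockey-stick) identity turns this into `C(r+i, i) C(r+n+1, n-i)`.
-/

open Finset

open Polynomial in
theorem realBinom_eq_choose (x : ℝ) (k : ℕ) : realBinom x k = Ring.choose x k := by
  rw [realBinom, Ring.choose_eq_smul, ← aeval_eq_smeval, aeval_def, eval₂_eq_eval_map,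
    descPochhammer_map, descPochhammer_eval_eq_prod_range, smul_eq_mul, div_eq_inv_mul]

namespace Ring

variable {R : Type*} [CommRing R] [BinomialRing R]

theorem natChoose_mul_choose_add (r : R) (k m : ℕ) :
    ((k + m).choose k : R) * choose (r + (k + m)) (k + m) =
      choose (r + k) k * choose (r + k + m) m := by
  have h := choose_add_smul_choose (r + k) k m
  rw [nsmul_eq_mul, ← Nat.choose_symm_add] at h
  rw [← add_assoc, h, mul_comm]

theorem sum_Ico_natChoose_mul_choose (r : R) {k n : ℕ} (hkn : k ≤ n) :
    ∑ j ∈ Ico k (n + 1), (j.choose k : R) * choose (r + j) j =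
      choose (r + k) k * choose (r + n + 1) (n - k) := by
  induction n, hkn using Nat.le_induction with
  | base => simp
  | succ n hkn ih =>
    obtain ⟨m, rfl⟩ := Nat.exists_eq_add_of_le hkn
    have hsplit := natChoose_mul_choose_add r k (m + 1)
    have hpascal := choose_succ_succ (r + k + m + 1) m
    rw [← add_assoc] at hsplit
    rw [sum_Ico_succ_top (by omega), ih, Nat.add_sub_cancel_left,
      show k + m + 1 - k = m + 1 by omega]
    push_cast at hsplit ⊢
    ring_nf at hsplit hpascal ⊢
    linear_combination hsplit - choose (r + k) k * hpascal

end Ring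

theorem sum_mul_pow_mul_add_pow {R : Type*} [CommRing R] (c : ℕ → R) (X Y : R) (n : ℕ) :
    ∑ j ∈ range (n + 1), c j * X ^ j * (X + Y) ^ (n - j) =
      ∑ i ∈ range (n + 1),
        (∑ j ∈ Ico i (n + 1), (j.choose i : R) * c j) * (X + Y) ^ (n - i) * (-Y) ^ i := by
  calc ∑ j ∈ range (n + 1), c j * X ^ j * (X + Y) ^ (n - j)
      = ∑ j ∈ range (n + 1), ∑ i ∈ range (j + 1),
          (j.choose i : R) * c j * (X + Y) ^ (n - i) * (-Y) ^ i := by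
        refine sum_congr rfl fun j hj => ?_
        rw [show X ^ j = (-Y + (X + Y)) ^ j by ring, add_pow, mul_sum, sum_mul]
        refine sum_congr rfl fun i hi => ?_
        rw [mem_range] at hi hj
        rw [show n - i = (j - i) + (n - j) by omega, pow_add]
        ring
    _ = _ := by
        simp only [range_eq_Ico, ← sum_Ico_Ico_comm, sum_mul]

theorem Pab_identity_general (a : ℕ) (b : ℝ) (X Y : ℝ) :
    Pab a b X Y =
      ∑ j ∈ Finset.range (a - 1),
        realBinom ((a : ℝ) + b - 3) (a - 2 - j) * realBinom ((j : ℝ) + b - 2) j *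
          (X + Y) ^ (a - 2 - j) * (-Y) ^ j := by
  obtain _ | _ | n := a
  · simp [Pab]
  · simp [Pab]
  have hj (j : ℕ) : realBinom ((j : ℝ) + b - 2) j = Ring.choose (b - 2 + j) j := by
    rw [realBinom_eq_choose]; congr 1; ring
  calc Pab (n + 2) b X Y
      = ∑ j ∈ range (n + 1), Ring.choose (b - 2 + j) j * X ^ j * (X + Y) ^ (n - j) :=
        sum_congr rfl fun j _ => by rw [hj, show n + 2 - j - 2 = n - j by omega]
    _ = ∑ i ∈ range (n + 1),
          (∑ j ∈ Ico i (n + 1), (j.choose i : ℝ) * Ring.choose (b - 2 + j) j) *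
            (X + Y) ^ (n - i) * (-Y) ^ i :=
        sum_mul_pow_mul_add_pow _ X Y n
    _ = _ := by
        refine sum_congr rfl fun i hi => ?_
        rw [Ring.sum_Ico_natChoose_mul_choose _ (Nat.lt_succ_iff.mp (mem_range.mp hi)), hj,
          realBinom_eq_choose, show n + 2 - 2 - i = n - i by omega]
        push_cast
        ring_nf

/-- Mertens' identity: for an integer `a ≥ 2` and a real `b ≠ 1, 2`,
`P_{a,b}(X,Y) = ∑_{j=0}^{a-2} (a+b-3 choose a-2-j)(j+b-2 choose j)(X+Y)^{a-2-j}(-Y)^j`. -/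
theorem Pab_identity (a : ℕ) (ha : 2 ≤ a) (b : ℝ) (hb1 : b ≠ 1) (hb2 : b ≠ 2) (X Y : ℝ) :
    Pab a b X Y =
      ∑ j ∈ Finset.range (a - 1),
        realBinom ((a : ℝ) + b - 3) (a - 2 - j) * realBinom ((j : ℝ) + b - 2) j *
          (X + Y) ^ (a - 2 - j) * (-Y) ^ j :=
  Pab_identity_general a b X Y
end

section
/- Let $q$ be an odd prime power with $q\equiv 3\pmod 4$, and let $\phi$ be the quadratic character of $\mathbb{F}_q$. For $\lambda\in\mathbb{F}_q\setminus\{0,1\}$ define $a_\lambda := -\sum_{x\in\mathbb{F}_q}\phi(x(x-1)(x-\lambda))$. Then $a_\lambda = -a_{1-\lambda}$; consequently $\sum_{\lambda\in\mathbb{F}_q\setminus\{0,1\}} a_\lambda^{m}=0$ for every odd positive integer $m$. -/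
/-! The substitution `x ↦ 1 - x` carries `x (x - 1) (x - λ)` to `-(x (x - 1) (x - (1 - λ)))`, so
`a_{1-λ} = φ(-1) a_λ`, and `φ(-1) = -1` exactly when `q ≡ 3 (mod 4)`. The odd moments then change
sign under the involution `λ ↦ 1 - λ` of `𝔽_q \ {0, 1}`, so they vanish. -/

theorem Finset.sum_eq_zero_of_involution_neg {ι M : Type*} [AddCommGroup M] [IsAddTorsionFree M]
    {s : Finset ι} {g : ι → M} (σ : ι → ι) (hs : ∀ i ∈ s, σ i ∈ s) (hσ : ∀ i ∈ s, σ (σ i) = i)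
    (hg : ∀ i ∈ s, g (σ i) = -g i) : ∑ i ∈ s, g i = 0 := by
  have h : ∑ i ∈ s, g i = ∑ i ∈ s, g (σ i) :=
    Finset.sum_nbij' σ σ hs hs hσ hσ fun i hi => by rw [hσ i hi]
  rw [Finset.sum_congr rfl hg, Finset.sum_neg_distrib] at h
  exact self_eq_neg.mp h

theorem quadraticChar_neg_one_of_card_mod_four_eq_three {F : Type*} [Field F] [Fintype F]
    [DecidableEq F] (hq : Fintype.card F % 4 = 3) : quadraticChar F (-1) = -1 := by
  rw [quadraticChar_neg_one_iff_not_isSquare, FiniteField.isSquare_neg_one_iff, hq]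
  decide

theorem MulChar.sum_legendre_one_sub {F R : Type*} [Field F] [Fintype F] [CommRing R]
    (χ : MulChar F R) (lam : F) :
    ∑ x : F, χ (x * (x - 1) * (x - (1 - lam))) = χ (-1) * ∑ x : F, χ (x * (x - 1) * (x - lam)) := by
  rw [Finset.mul_sum]
  refine Fintype.sum_equiv (Equiv.subLeft 1) _ _ fun x => ?_
  rw [Equiv.subLeft_apply, ← map_mul]
  congr 1
  ring

/-- Let `F = 𝔽_q` with `q ≡ 3 (mod 4)` and `φ` the quadratic character. For
`λ ∉ {0,1}`, the Legendre trace `a_λ = -∑_x φ(x(x-1)(x-λ))` satisfies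
`a_λ = -a_{1-λ}`; consequently `∑_{λ ≠ 0,1} a_λ^m = 0` for every odd positive `m`. -/
theorem legendre_odd_moments_vanish (F : Type*) [Field F] [Fintype F] [DecidableEq F]
    (hq : Fintype.card F % 4 = 3)
    (a : F → ℤ)
    (ha : ∀ lam : F, a lam = -∑ x : F, quadraticChar F (x * (x - 1) * (x - lam))) :
    (∀ lam : F, lam ≠ 0 → lam ≠ 1 → a lam = -a (1 - lam)) ∧
      ∀ m : ℕ, Odd m → 0 < m →
        ∑ lam ∈ (Finset.univ \ {0, 1} : Finset F), a lam ^ m = 0 := by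
  have reflect (lam : F) : a (1 - lam) = -a lam := by
    rw [ha, ha, MulChar.sum_legendre_one_sub,
      quadraticChar_neg_one_of_card_mod_four_eq_three hq, neg_one_mul]
  refine ⟨fun lam _ _ => by rw [reflect, neg_neg], fun m hm _ => ?_⟩
  refine Finset.sum_eq_zero_of_involution_neg (1 - ·) (fun lam hlam => ?_)
    (fun lam _ => sub_sub_cancel 1 lam) (fun lam _ => by rw [reflect, hm.neg_pow])
  simp only [Finset.mem_sdiff, Finset.mem_univ, Finset.mem_insert, Finset.mem_singleton,
    true_and, not_or, sub_eq_zero, sub_eq_self] at hlam ⊢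
  exact ⟨fun h => hlam.2 h.symm, hlam.1⟩
end

section
/- Let $q$ be an odd prime power with $q\equiv 1\pmod 4$ and let $E/\mathbb{F}_q$ be the elliptic curve $y^2=x(x-\alpha)(x-\beta)$ where $\alpha$, $\beta$, and $\alpha-\beta$ are all nonsquares in $\mathbb{F}_q^\times$. Then $|E(\mathbb{F}_q)|\not\equiv 0\pmod 8$. -/
/-!
The 2-torsion of `y² = (x - e₁)(x - e₂)(x - e₃)` consists of `0` and the three points `(eᵢ, 0)`,
so it has order at most `4`. The duplication formula writes `x(2P) - eᵢ` as a square for every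
root `eᵢ`, so `(eᵢ, 0)` can only be a double if all differences `eᵢ - eⱼ` are squares. For the
roots `0, α, β` this is excluded by `α`, `β` being nonsquares and `-1` being a square
(`q ≡ 1 mod 4`). Hence there is no point of order `4`, doubling has image of odd order, and the
`2`-part of `|E(𝔽_q)|` is the order of the 2-torsion, which is at most `4`.
-/

section TwoTorsion

variable {G : Type*} [AddCommGroup G] [Finite G]

lemma odd_card_range_nsmulAddMonoidHom_two (hG : ∀ g : G, 2 • (2 • g) = 0 → 2 • g = 0) :
    Odd (Nat.card (nsmulAddMonoidHom 2 : G →+ G).range) := by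
  rw [Nat.odd_iff, ← Nat.two_dvd_ne_zero]
  intro heven
  obtain ⟨x, hx⟩ := exists_prime_addOrderOf_dvd_card' 2 heven
  obtain ⟨g, hg⟩ := x.2
  rw [nsmulAddMonoidHom_apply] at hg
  have h2x : 2 • (x : G) = 0 := congrArg Subtype.val (hx ▸ addOrderOf_nsmul_eq_zero x)
  have hx0 : x = 0 := Subtype.ext (hg ▸ hG g (hg ▸ h2x))
  simp [hx0] at hx

lemma two_pow_dvd_card_ker_nsmulAddMonoidHom_two (hG : ∀ g : G, 2 • (2 • g) = 0 → 2 • g = 0)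
    {k : ℕ} (hk : 2 ^ k ∣ Nat.card G) :
    2 ^ k ∣ Nat.card (nsmulAddMonoidHom 2 : G →+ G).ker := by
  rw [← AddSubgroup.card_mul_index (nsmulAddMonoidHom 2 : G →+ G).ker, AddSubgroup.index_ker] at hk
  exact ((odd_card_range_nsmulAddMonoidHom_two hG).coprime_two_left.pow_left k).dvd_of_dvd_mul_right
    hk

end TwoTorsion

namespace WeierstrassCurve

section CommRing

variable {R : Type*} [CommRing R] (e₁ e₂ e₃ : R)

def ofRoots : WeierstrassCurve R :=
  ⟨0, -(e₁ + e₂ + e₃), 0, e₁ * e₂ + e₁ * e₃ + e₂ * e₃, -(e₁ * e₂ * e₃)⟩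

lemma ofRoots_equation_iff {x y : R} :
    (ofRoots e₁ e₂ e₃).toAffine.Equation x y ↔ y ^ 2 = (x - e₁) * (x - e₂) * (x - e₃) := by
  rw [Affine.equation_iff]
  simp only [ofRoots]
  constructor <;> intro h <;> linear_combination h

@[simp]
lemma ofRoots_negY (x y : R) : (ofRoots e₁ e₂ e₃).toAffine.negY x y = -y := by
  simp [ofRoots]

lemma ofRoots_swap : ofRoots e₂ e₁ e₃ = ofRoots e₁ e₂ e₃ := by
  rw [ofRoots, ofRoots]; congr 1 <;> ring

lemma ofRoots_rotate : ofRoots e₃ e₁ e₂ = ofRoots e₁ e₂ e₃ := by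
  rw [ofRoots, ofRoots]; congr 1 <;> ring

end CommRing

namespace Affine

instance {R : Type*} [CommRing R] [Finite R] (W : Affine R) : Finite W.Point :=
  Finite.of_equiv (Option {xy : R × R // W.Nonsingular xy.1 xy.2}) W.nonsingularPointEquiv.symm

namespace Point

variable {F : Type*} [Field F] [DecidableEq F] {W : Affine F}

lemma some_add_self_eq_zero_iff {x y : F} (h : W.Nonsingular x y) :
    some x y h + some x y h = 0 ↔ y = W.negY x y :=
  ⟨fun h0 ↦ by_contra fun hy ↦ some_ne_zero _ ((add_self_of_Y_ne hy).symm.trans h0),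
    add_self_of_Y_eq⟩

lemma injOn_xRep_ker_nsmulAddMonoidHom_two :
    Set.InjOn xRep ((nsmulAddMonoidHom 2 : W.Point →+ W.Point).ker : Set W.Point) := by
  intro P _ Q hQ hPQ
  rw [SetLike.mem_coe, AddMonoidHom.mem_ker, nsmulAddMonoidHom_apply, two_nsmul,
    add_eq_zero_iff_eq_neg] at hQ
  rcases xRep_eq_xRep_iff.mp hPQ with h | h
  · exact h
  · rw [h, ← hQ]

end Point

end Affine

section Field

variable {F : Type*} [Field F] {e₁ e₂ e₃ : F}

lemma eq_or_eq_or_eq_of_Y_eq_negY (h2 : (2 : F) ≠ 0) {x y : F}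
    (h : (ofRoots e₁ e₂ e₃).toAffine.Equation x y)
    (hy : y = (ofRoots e₁ e₂ e₃).toAffine.negY x y) : x = e₁ ∨ x = e₂ ∨ x = e₃ := by
  rw [ofRoots_negY, eq_neg_iff_add_eq_zero, ← two_mul, mul_eq_zero, or_iff_right h2] at hy
  rw [ofRoots_equation_iff, hy] at h
  simpa [sub_eq_zero, or_assoc] using h.symm

variable [DecidableEq F]

lemma isSquare_addX_sub_of_Y_ne_negY {x y : F} (h : (ofRoots e₁ e₂ e₃).toAffine.Equation x y)
    (hy : y ≠ (ofRoots e₁ e₂ e₃).toAffine.negY x y) :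
    IsSquare ((ofRoots e₁ e₂ e₃).toAffine.addX x x
      ((ofRoots e₁ e₂ e₃).toAffine.slope x x y y) - e₁) := by
  have h2y : 2 * y ≠ 0 := by rwa [ofRoots_negY, ne_eq, eq_neg_iff_add_eq_zero, ← two_mul] at hy
  have h2 : (2 : F) ≠ 0 := left_ne_zero_of_mul h2y
  have hy0 : y ≠ 0 := right_ne_zero_of_mul h2y
  rw [Affine.slope_of_Y_ne rfl hy, ofRoots_negY, sub_neg_eq_add, ← two_mul]
  refine ⟨((x - e₁) ^ 2 - (e₁ - e₂) * (e₁ - e₃)) / (2 * y), ?_⟩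
  rw [ofRoots_equation_iff] at h
  simp only [Affine.addX, ofRoots, zero_mul, sub_zero, add_zero]
  field_simp
  linear_combination 4 * (e₂ + e₃ - 2 * x) * h

open Affine.Point in
lemma isSquare_sub_of_two_nsmul_eq_some {P : (ofRoots e₁ e₂ e₃).toAffine.Point} {x y : F}
    {h : (ofRoots e₁ e₂ e₃).toAffine.Nonsingular x y} (hP : 2 • P = some x y h) :
    IsSquare (x - e₁) ∧ IsSquare (x - e₂) ∧ IsSquare (x - e₃) := by
  rcases P with _ | ⟨x₀, y₀, h₀⟩
  · exact absurd hP.symm (by simp [← zero_def])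
  have hy : y₀ ≠ (ofRoots e₁ e₂ e₃).toAffine.negY x₀ y₀ := fun hy ↦
    some_ne_zero h (hP ▸ (two_nsmul (some x₀ y₀ h₀)).trans (add_self_of_Y_eq hy))
  rw [two_nsmul, add_self_of_Y_ne hy, some.injEq] at hP
  obtain ⟨rfl, -⟩ := hP
  have h₀ := h₀.1
  refine ⟨isSquare_addX_sub_of_Y_ne_negY h₀ hy, ?_, ?_⟩
  · rw [← ofRoots_swap] at h₀ hy ⊢
    exact isSquare_addX_sub_of_Y_ne_negY h₀ hy
  · rw [← ofRoots_rotate] at h₀ hy ⊢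
    exact isSquare_addX_sub_of_Y_ne_negY h₀ hy

open Affine.Point in
lemma card_ker_nsmulAddMonoidHom_two_le (h2 : (2 : F) ≠ 0) :
    Nat.card (nsmulAddMonoidHom 2 : (ofRoots e₁ e₂ e₃).toAffine.Point →+ _).ker ≤ 4 := by
  let S : Finset (Fin 2 → F) := {![1, 0], ![e₁, 1], ![e₂, 1], ![e₃, 1]}
  have hmaps : ∀ P ∈ ((nsmulAddMonoidHom 2 : (ofRoots e₁ e₂ e₃).toAffine.Point →+ _).ker :
      Set (ofRoots e₁ e₂ e₃).toAffine.Point), xRep P ∈ (S : Set (Fin 2 → F)) := by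
    rintro (_ | ⟨x, y, h⟩) hP
    · simp [S, ← zero_def]
    rw [SetLike.mem_coe, AddMonoidHom.mem_ker, nsmulAddMonoidHom_apply, two_nsmul,
      some_add_self_eq_zero_iff] at hP
    rcases eq_or_eq_or_eq_of_Y_eq_negY h2 h.1 hP with rfl | rfl | rfl <;> simp [S]
  rw [← SetLike.coe_sort_coe, Nat.card_coe_set_eq]
  exact (Set.ncard_le_ncard_of_injOn _ hmaps injOn_xRep_ker_nsmulAddMonoidHom_two).trans
    ((Set.ncard_coe_finset _).trans_le Finset.card_le_four)

lemma two_nsmul_eq_zero_of_two_nsmul_two_nsmul_eq_zero (h2 : (2 : F) ≠ 0)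
    (h₁ : ¬IsSquare (e₁ - e₂)) (h₂ : ¬IsSquare (e₂ - e₁)) (h₃ : ¬IsSquare (e₃ - e₁))
    (P : (ofRoots e₁ e₂ e₃).toAffine.Point) (hP : 2 • (2 • P) = 0) : 2 • P = 0 := by
  rcases hQ : 2 • P with _ | ⟨x, y, h⟩
  · rfl
  rw [hQ, two_nsmul, Affine.Point.some_add_self_eq_zero_iff] at hP
  obtain ⟨hx₁, hx₂, -⟩ := isSquare_sub_of_two_nsmul_eq_some hQ
  rcases eq_or_eq_or_eq_of_Y_eq_negY h2 h.1 hP with rfl | rfl | rfl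
  exacts [absurd hx₂ h₁, absurd hx₁ h₂, absurd hx₁ h₃]

end Field

end WeierstrassCurve

theorem inconvenient_curve_card_general (F : Type*) [Field F] [Fintype F]
    (hq : Fintype.card F % 4 = 1)
    (α β : F) (hα : ¬IsSquare α) (hβ : ¬IsSquare β) :
    ¬(8 ∣ Nat.card
        (WeierstrassCurve.Affine.Point
          (WeierstrassCurve.toAffine
            (⟨0, -(α + β), 0, α * β, 0⟩ : WeierstrassCurve F)))) := by
  classical
  have h2 : (2 : F) ≠ 0 :=
    Ring.two_ne_zero fun h ↦ by have := FiniteField.even_card_iff_char_two.mp h; omega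
  have hneg : IsSquare (-1 : F) := FiniteField.isSquare_neg_one_iff.mpr (by omega)
  have hW : (⟨0, -(α + β), 0, α * β, 0⟩ : WeierstrassCurve F) = .ofRoots 0 α β := by
    simp [WeierstrassCurve.ofRoots]
  have hG := WeierstrassCurve.two_nsmul_eq_zero_of_two_nsmul_two_nsmul_eq_zero
    (e₁ := 0) (e₂ := α) (e₃ := β) h2 (fun h ↦ hα (by simpa using hneg.mul h)) (by simpa) (by simpa)
  have hker := WeierstrassCurve.card_ker_nsmulAddMonoidHom_two_le (e₁ := 0) (e₂ := α) (e₃ := β) h2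
  rw [hW]
  intro h8
  have := Nat.le_of_dvd Nat.card_pos (two_pow_dvd_card_ker_nsmulAddMonoidHom_two hG (k := 3) h8)
  omega

/-- Let `q ≡ 1 (mod 4)` with characteristic `≥ 5`, and let `E : y² = x(x-α)(x-β)`
where `α`, `β` and `α-β` are all nonsquares in `𝔽_q`. Then `8 ∤ |E(𝔽_q)|`. -/
theorem inconvenient_curve_card (F : Type*) [Field F] [Fintype F]
    (hq : Fintype.card F % 4 = 1) (hp : 5 ≤ ringChar F)
    (α β : F) (hα : ¬IsSquare α) (hβ : ¬IsSquare β) (hαβ : ¬IsSquare (α - β)) :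
    ¬(8 ∣ Nat.card
        (WeierstrassCurve.Affine.Point
          (WeierstrassCurve.toAffine
            (⟨0, -(α + β), 0, α * β, 0⟩ : WeierstrassCurve F)))) :=
  inconvenient_curve_card_general F hq α β hα hβ
end
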